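/- (Maximal dwell-time.) Let T > 0 and let A, J be real n×n matrices. Suppose there exists a real symmetric positive definite n×n matrix P such that AᵀP + PA is positive definite and ℐ(P,A,J,T) is negative definite. Then ℐ(P,A,J,s) is negative definite for every s with 0 ≤ s ≤ T, and consequently for every sequence (T_k)_{k∈ℕ} of reals with 0 < T_k ≤ T for all k and every x₀ ∈ ℝⁿ, the sequence defined by x_{k+1} = exp(T_k·A)·J·x_k, x_0 = x₀, tends to 0 as k → ∞. -/

import Mathlib

/-!
Along `w(u) = exp(u A) z` the Lyapunov function `V = wᵀ P w` has derivative `wᵀ (AᵀP + PA) w ≥ 0`,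
so `xᵀ ℐ(P,A,J,s) x = V(s) - xᵀ P x` with `z = J x` is nondecreasing in `s`; this gives the first
claim. Along the impulsive trajectory, `V(x_{k+1}) - V(x_k) = x_kᵀ ℐ(P,A,J,T_k) x_k ≤ x_kᵀ ℐ(P,A,J,T) x_k`,
and the right-hand side is at most `-c ‖x_k‖²` for some `c > 0` by compactness of the unit sphere.
Telescoping makes `∑ ‖x_k‖²` finite, so `x_k → 0`.
-/

open Matrix Filter Finset Topology

/-- Matrix exponential of a real square matrix. -/
noncomputable def mexp {n : ℕ} (A : Matrix (Fin n) (Fin n) ℝ) : Matrix (Fin n) (Fin n) ℝ :=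
  NormedSpace.exp A

/-- ℐ(P,A,J,T) := Jᵀ·exp(T·Aᵀ)·P·exp(T·A)·J − P. -/
noncomputable def scrI {n : ℕ} (P A J : Matrix (Fin n) (Fin n) ℝ) (T : ℝ) :
    Matrix (Fin n) (Fin n) ℝ :=
  Jᵀ * mexp (T • Aᵀ) * P * mexp (T • A) * J - P

/-- xᵀMx < 0 for all x ≠ 0. -/
def negDef {m : Type*} [Fintype m] (M : Matrix m m ℝ) : Prop :=
  ∀ x : m → ℝ, x ≠ 0 → x ⬝ᵥ M.mulVec x < 0

/-- xᵀMx > 0 for all x ≠ 0. -/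
def posDef {m : Type*} [Fintype m] (M : Matrix m m ℝ) : Prop :=
  ∀ x : m → ℝ, x ≠ 0 → 0 < x ⬝ᵥ M.mulVec x

/-- xᵀMx ≥ 0 for all x. -/
def posSemidef {m : Type*} [Fintype m] (M : Matrix m m ℝ) : Prop :=
  ∀ x : m → ℝ, 0 ≤ x ⬝ᵥ M.mulVec x

section Calculus

variable {m : Type*} [Fintype m] {f g : ℝ → m → ℝ} {f' g' : m → ℝ} {t : ℝ}

theorem HasDerivAt.dotProduct (hf : HasDerivAt f f' t) (hg : HasDerivAt g g' t) :
    HasDerivAt (fun u => f u ⬝ᵥ g u) (f' ⬝ᵥ g t + f t ⬝ᵥ g') t := by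
  simp only [_root_.dotProduct, ← Finset.sum_add_distrib]
  exact HasDerivAt.fun_sum fun i _ => (hasDerivAt_pi.1 hf i).mul (hasDerivAt_pi.1 hg i)

theorem HasDerivAt.matrix_mulVec (M : Matrix m m ℝ) (hf : HasDerivAt f f' t) :
    HasDerivAt (fun u => M *ᵥ f u) (M *ᵥ f') t :=
  (LinearMap.toContinuousLinearMap (Matrix.mulVecLin M)).hasFDerivAt.comp_hasDerivAt t hf

end Calculus

theorem hasDerivAt_mexp_smul_mulVec {n : ℕ} (A : Matrix (Fin n) (Fin n) ℝ) (z : Fin n → ℝ)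
    (t : ℝ) : HasDerivAt (fun u : ℝ => mexp (u • A) *ᵥ z) (A *ᵥ (mexp (t • A) *ᵥ z)) t := by
  let _ : NormedRing (Matrix (Fin n) (Fin n) ℝ) := Matrix.linftyOpNormedRing
  let _ : NormedAlgebra ℝ (Matrix (Fin n) (Fin n) ℝ) := Matrix.linftyOpNormedAlgebra
  let applyTo : Matrix (Fin n) (Fin n) ℝ →ₗ[ℝ] Fin n → ℝ :=
    LinearMap.applyₗ z ∘ₗ Matrix.toLin'.toLinearMap
  rw [mulVec_mulVec]
  exact (LinearMap.toContinuousLinearMap applyTo).hasFDerivAt.comp_hasDerivAt t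
    (hasDerivAt_exp_smul_const' (𝕂 := ℝ) A t)

section QuadraticForms

variable {m : Type*} [Fintype m]

theorem posDef.posSemidef {M : Matrix m m ℝ} (hM : posDef M) : posSemidef M := by
  intro x
  rcases eq_or_ne x 0 with rfl | hx
  · simp
  · exact (hM x hx).le

theorem negDef.posDef_neg {N : Matrix m m ℝ} (hN : negDef N) : posDef (-N) := fun x hx => by
  simpa [neg_mulVec] using hN x hx

theorem smul_dotProduct_mulVec_smul (M : Matrix m m ℝ) (c : ℝ) (v : m → ℝ) :
    (c • v) ⬝ᵥ M *ᵥ (c • v) = c ^ 2 * (v ⬝ᵥ M *ᵥ v) := by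
  simp only [mulVec_smul, smul_dotProduct, dotProduct_smul, smul_eq_mul]
  ring

theorem dotProduct_transpose_mul_add_mul_mulVec (A P : Matrix m m ℝ) (y : m → ℝ) :
    y ⬝ᵥ (Aᵀ * P + P * A) *ᵥ y = A *ᵥ y ⬝ᵥ P *ᵥ y + y ⬝ᵥ P *ᵥ (A *ᵥ y) := by
  rw [add_mulVec, dotProduct_add, ← mulVec_mulVec, ← mulVec_mulVec, dotProduct_mulVec y Aᵀ,
    vecMul_transpose]

theorem posDef.exists_pos_mul_norm_sq_le {M : Matrix m m ℝ} (hM : posDef M) :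
    ∃ c > 0, ∀ x : m → ℝ, c * ‖x‖ ^ 2 ≤ x ⬝ᵥ M *ᵥ x := by
  have hcont : Continuous fun v : m → ℝ => v ⬝ᵥ M *ᵥ v :=
    continuous_id.dotProduct (continuous_const.matrix_mulVec continuous_id)
  obtain ⟨c, hc, hcS⟩ : ∃ c > 0, ∀ u ∈ Metric.sphere (0 : m → ℝ) 1, c ≤ u ⬝ᵥ M *ᵥ u := by
    rcases (Metric.sphere (0 : m → ℝ) 1).eq_empty_or_nonempty with hS | hS
    · exact ⟨1, one_pos, by simp [hS]⟩
    · obtain ⟨u, hu, hmin⟩ := (isCompact_sphere 0 1).exists_isMinOn hS hcont.continuousOn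
      exact ⟨_, hM u (ne_zero_of_mem_unit_sphere ⟨u, hu⟩), fun v hv => hmin hv⟩
  refine ⟨c, hc, fun x => ?_⟩
  rcases eq_or_ne x 0 with rfl | hx
  · simp
  have hx' : ‖x‖ ≠ 0 := norm_ne_zero_iff.mpr hx
  have hunit := hcS (‖x‖⁻¹ • x) (mem_sphere_zero_iff_norm.mpr (norm_smul_inv_norm (𝕜 := ℝ) hx))
  calc c * ‖x‖ ^ 2 ≤ (‖x‖⁻¹ • x) ⬝ᵥ M *ᵥ (‖x‖⁻¹ • x) * ‖x‖ ^ 2 := by gcongr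
    _ = x ⬝ᵥ M *ᵥ x := by rw [smul_dotProduct_mulVec_smul]; field_simp

theorem tendsto_zero_of_dotProduct_mulVec_succ_le {P N : Matrix m m ℝ} (hP : posSemidef P)
    (hN : negDef N) {x : ℕ → m → ℝ}
    (hx : ∀ k, x (k + 1) ⬝ᵥ P *ᵥ x (k + 1) ≤ x k ⬝ᵥ P *ᵥ x k + x k ⬝ᵥ N *ᵥ x k) :
    Tendsto x atTop (𝓝 0) := by
  obtain ⟨c, hc, hcN⟩ := hN.posDef_neg.exists_pos_mul_norm_sq_le
  set V : ℕ → ℝ := fun k => x k ⬝ᵥ P *ᵥ x k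
  set w : ℕ → ℝ := fun k => -(x k ⬝ᵥ N *ᵥ x k)
  have hnorm_le : ∀ k, c * ‖x k‖ ^ 2 ≤ w k := fun k => by simpa [neg_mulVec] using hcN (x k)
  have hw0 : ∀ k, 0 ≤ w k := fun k => (by positivity : 0 ≤ c * ‖x k‖ ^ 2).trans (hnorm_le k)
  have hsum : ∀ K, ∑ k ∈ range K, w k ≤ V 0 := fun K =>
    calc ∑ k ∈ range K, w k ≤ ∑ k ∈ range K, (V k - V (k + 1)) :=
          sum_le_sum fun k _ => by linarith [hx k]
      _ = V 0 - V K := sum_range_sub' V K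
      _ ≤ V 0 := sub_le_self _ (hP _)
  have hw : Tendsto w atTop (𝓝 0) := (summable_of_sum_range_le hw0 hsum).tendsto_atTop_zero
  have hsq : Tendsto (fun k => ‖x k‖ ^ 2) atTop (𝓝 0) := by
    refine squeeze_zero (fun k => sq_nonneg _) (fun k => ?_) (by simpa using hw.div_const c)
    rw [le_div_iff₀ hc, mul_comm]
    exact hnorm_le k
  rw [tendsto_zero_iff_norm_tendsto_zero]
  simpa [Real.sqrt_sq (norm_nonneg _)] using hsq.sqrt

end QuadraticForms

section DwellTime

variable {n : ℕ}

theorem monotone_dotProduct_mexp_smul_mulVec {A P : Matrix (Fin n) (Fin n) ℝ}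
    (hC : posSemidef (Aᵀ * P + P * A)) (z : Fin n → ℝ) :
    Monotone fun u : ℝ => mexp (u • A) *ᵥ z ⬝ᵥ P *ᵥ (mexp (u • A) *ᵥ z) := by
  have hderiv : ∀ t : ℝ, HasDerivAt (fun u : ℝ => mexp (u • A) *ᵥ z ⬝ᵥ P *ᵥ (mexp (u • A) *ᵥ z))
      (mexp (t • A) *ᵥ z ⬝ᵥ (Aᵀ * P + P * A) *ᵥ (mexp (t • A) *ᵥ z)) t := fun t => by
    rw [dotProduct_transpose_mul_add_mul_mulVec]
    exact (hasDerivAt_mexp_smul_mulVec A z t).dotProduct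
      ((hasDerivAt_mexp_smul_mulVec A z t).matrix_mulVec P)
  exact monotone_of_deriv_nonneg (fun t => (hderiv t).differentiableAt)
    fun t => (hderiv t).deriv ▸ hC _

theorem dotProduct_scrI_mulVec (P A J : Matrix (Fin n) (Fin n) ℝ) (s : ℝ) (x : Fin n → ℝ) :
    x ⬝ᵥ scrI P A J s *ᵥ x =
      mexp (s • A) *ᵥ (J *ᵥ x) ⬝ᵥ P *ᵥ (mexp (s • A) *ᵥ (J *ᵥ x)) - x ⬝ᵥ P *ᵥ x := by
  have hexp_transpose : mexp (s • Aᵀ) = (mexp (s • A))ᵀ := by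
    rw [mexp, mexp, ← transpose_smul, exp_transpose]
  rw [scrI, hexp_transpose, sub_mulVec, dotProduct_sub, ← transpose_mul, Matrix.mul_assoc,
    ← mulVec_mulVec, ← mulVec_mulVec, dotProduct_mulVec x (mexp (s • A) * J)ᵀ, vecMul_transpose]
  simp only [mulVec_mulVec]

theorem dotProduct_scrI_mulVec_mono {P A : Matrix (Fin n) (Fin n) ℝ}
    (hC : posSemidef (Aᵀ * P + P * A)) (J : Matrix (Fin n) (Fin n) ℝ) {s t : ℝ} (hst : s ≤ t)
    (x : Fin n → ℝ) : x ⬝ᵥ scrI P A J s *ᵥ x ≤ x ⬝ᵥ scrI P A J t *ᵥ x := by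
  rw [dotProduct_scrI_mulVec, dotProduct_scrI_mulVec]
  exact sub_le_sub_right (monotone_dotProduct_mexp_smul_mulVec hC (J *ᵥ x) hst) _

end DwellTime

theorem stmt4_general {n : ℕ} (T : ℝ) (A J : Matrix (Fin n) (Fin n) ℝ)
    (P : Matrix (Fin n) (Fin n) ℝ) (hP : posDef P)
    (hC : posDef (Aᵀ * P + P * A)) (hI : negDef (scrI P A J T)) :
    (∀ s : ℝ, 0 ≤ s → s ≤ T → negDef (scrI P A J s)) ∧
    (∀ Tk : ℕ → ℝ, (∀ k, 0 < Tk k ∧ Tk k ≤ T) →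
      ∀ x₀ : Fin n → ℝ, ∀ x : ℕ → Fin n → ℝ, x 0 = x₀ →
        (∀ k, x (k + 1) = (mexp (Tk k • A) * J).mulVec (x k)) →
        Tendsto x atTop (nhds 0)) := by
  have hmono : ∀ s ≤ T, ∀ v, v ⬝ᵥ scrI P A J s *ᵥ v ≤ v ⬝ᵥ scrI P A J T *ᵥ v :=
    fun s hsT => dotProduct_scrI_mulVec_mono hC.posSemidef J hsT
  refine ⟨fun s _ hsT v hv => (hmono s hsT v).trans_lt (hI v hv), ?_⟩
  intro Tk hTk x₀ x _ hx
  refine tendsto_zero_of_dotProduct_mulVec_succ_le hP.posSemidef hI fun k => ?_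
  rw [hx k, ← mulVec_mulVec]
  linarith [dotProduct_scrI_mulVec P A J (Tk k) (x k), hmono (Tk k) (hTk k).2 (x k)]

/-- Maximal dwell-time: if `P ≻ 0` is symmetric with `AᵀP + PA ≻ 0` and
`ℐ(P,A,J,T) ≺ 0`, then `ℐ(P,A,J,s) ≺ 0` for all `0 ≤ s ≤ T`, and every impulsive trajectory
with dwell-times `0 < T_k ≤ T` tends to `0`. -/
theorem stmt4 {n : ℕ} (T : ℝ) (hT : 0 < T) (A J : Matrix (Fin n) (Fin n) ℝ)
    (P : Matrix (Fin n) (Fin n) ℝ) (hPsym : P.IsSymm) (hP : posDef P)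
    (hC : posDef (Aᵀ * P + P * A)) (hI : negDef (scrI P A J T)) :
    (∀ s : ℝ, 0 ≤ s → s ≤ T → negDef (scrI P A J s)) ∧
    (∀ Tk : ℕ → ℝ, (∀ k, 0 < Tk k ∧ Tk k ≤ T) →
      ∀ x₀ : Fin n → ℝ, ∀ x : ℕ → Fin n → ℝ, x 0 = x₀ →
        (∀ k, x (k + 1) = (mexp (Tk k • A) * J).mulVec (x k)) →
        Tendsto x atTop (nhds 0)) :=
  stmt4_general T A J P hP hC hI
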